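/- (Existence of a self-similar three-vortex collapse for every α) For every α > 0 there exist a nonzero real a, a time T > 0, pairwise distinct initial points x_1(0), x_2(0), x_3(0) ∈ ℝ², and a solution (x_1, x_2, x_3) of the α-point-vortex system on [0,T) with intensities a_1 = a, a_2 = a_3 = 1 and these initial values, such that |x_2(0) − x_3(0)| = 1, |x_2(t) − x_3(t)| = (1 − t/T)^{1/(α+1)} for all t ∈ [0,T), and |x_i(t) − x_j(t)| → 0 as t → T⁻ for all i, j ∈ {1,2,3}. In particular, the α-point-vortex system admits collapses in finite time, and the Hölder exponent 1/(α+1) is optimal. -/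

import Mathlib

/-!
Look for a collapsing solution of the form `x_i(t) = (1 - t/T)^γ z_i` with `γ ∈ ℂ`. Since the
vortex velocity is homogeneous of degree `-α` in the positions, this solves the system as soon as
the configuration `z` is self-similar, `V(z) = κ z` with `Re κ < 0`, and `γ = -κT`,
`Re γ = 1/(α+1)`. For intensities `(a, 1, 1)` such a configuration is a triangle with sides
`d₁ > 1 > d₂` and `|z₁ - z₂| = 1`, centred at its centre of vorticity; after fixing `a` and `κ`,
self-similarity reduces to the single relation `(1 - d₁^{-(α+1)}) d₁² = (d₂^{-(α+1)} - 1) d₂²`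
between the sides, which is solved by the intermediate value theorem.
-/

open Complex ComplexConjugate Filter Set Topology

section VortexVelocity

variable {ι : Type*} [Fintype ι] [DecidableEq ι]

noncomputable def vortexVelocity (α : ℝ) (a : ι → ℝ) (z : ι → ℂ) (i : ι) : ℂ :=
  ∑ j ∈ Finset.univ.filter (fun j => j ≠ i), (a j / ‖z i - z j‖ ^ (α + 1)) • (I * (z i - z j))

theorem vortexVelocity_eq_sum (α : ℝ) (a : ι → ℝ) (z : ι → ℂ) (i : ι) :
    vortexVelocity α a z i = ∑ j, (a j / ‖z i - z j‖ ^ (α + 1)) • (I * (z i - z j)) :=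
  Finset.sum_filter_of_ne fun j _ h hji => h (by simp [hji])

theorem vortexVelocity_const_mul (α : ℝ) (a : ι → ℝ) (z : ι → ℂ) (i : ι) (c : ℂ) :
    vortexVelocity α a (fun j => c * z j) i
      = c / (‖c‖ ^ (α + 1) : ℝ) * vortexVelocity α a z i := by
  simp only [vortexVelocity, Finset.mul_sum, ← mul_sub, norm_mul,
    Real.mul_rpow (norm_nonneg c) (norm_nonneg _), Complex.real_smul, Complex.ofReal_div,
    Complex.ofReal_mul]
  exact Finset.sum_congr rfl fun j _ => by ring

end VortexVelocity

section CollapseProfile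

variable (γ : ℂ) {T t : ℝ}

noncomputable def collapseProfile (γ : ℂ) (T t : ℝ) : ℂ := ((1 - t / T : ℝ) : ℂ) ^ γ

@[simp]
theorem collapseProfile_zero (T : ℝ) : collapseProfile γ T 0 = 1 := by
  simp [collapseProfile]

theorem norm_collapseProfile (hτ : 0 < 1 - t / T) :
    ‖collapseProfile γ T t‖ = (1 - t / T) ^ γ.re :=
  norm_cpow_eq_rpow_re_of_pos hτ γ

theorem hasDerivAt_collapseProfile (hτ : 0 < 1 - t / T) :
    HasDerivAt (collapseProfile γ T) (-γ / (T * (1 - t / T)) * collapseProfile γ T t) t := by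
  have hτ' : (1 : ℂ) - t / T ∈ slitPlane := by exact_mod_cast ofReal_mem_slitPlane.2 hτ
  have := ((((hasDerivAt_id (t : ℂ)).div_const (T : ℂ)).const_sub 1).cpow_const
    (c := γ) hτ').comp_ofReal
  simp only [id] at this
  convert this using 1
  · ext s; simp [collapseProfile]
  · rw [cpow_sub _ _ (by exact_mod_cast hτ.ne'), cpow_one, collapseProfile]
    push_cast
    field_simp

theorem tendsto_norm_collapseProfile (hT : 0 < T) (hγ : 0 < γ.re) :
    Tendsto (fun t => ‖collapseProfile γ T t‖) (𝓝[<] T) (𝓝 0) := by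
  have hτ : Tendsto (fun t : ℝ => 1 - t / T) (𝓝[<] T) (𝓝 0) :=
    tendsto_nhdsWithin_of_tendsto_nhds <|
      (continuous_const.sub (continuous_id.div_const T)).tendsto' T 0 (by simp [hT.ne'])
  have hpow : Tendsto (fun τ : ℝ => τ ^ γ.re) (𝓝 0) (𝓝 0) := by
    simpa [Real.zero_rpow hγ.ne'] using
      (Real.continuousAt_rpow_const 0 γ.re (.inr hγ.le)).tendsto
  refine (hpow.comp hτ).congr' ?_
  filter_upwards [self_mem_nhdsWithin] with t ht
  exact (norm_collapseProfile γ (sub_pos.2 ((div_lt_one hT).2 ht))).symm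

end CollapseProfile

section SelfSimilar

variable {ι : Type*} [Fintype ι] [DecidableEq ι] {α : ℝ} {a : ι → ℝ} {z : ι → ℂ} {κ : ℂ}

theorem hasDerivAt_collapseProfile_mul {T t : ℝ} (hz : ∀ i, vortexVelocity α a z i = κ * z i)
    (hκT : (α + 1) * (κ.re * T) = -1) (hτ : 0 < 1 - t / T) (i : ι) :
    HasDerivAt (fun s => collapseProfile (-κ * T) T s * z i)
      (vortexVelocity α a (fun j => collapseProfile (-κ * T) T t * z j) i) t := by
  have hT : (T : ℂ) ≠ 0 := by
    rintro hT
    simp [ofReal_eq_zero.1 hT] at hκT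
  have hnorm : ‖collapseProfile (-κ * T) T t‖ ^ (α + 1) = 1 - t / T := by
    rw [norm_collapseProfile _ hτ, ← Real.rpow_mul hτ.le]
    convert Real.rpow_one _ using 2
    simp only [neg_mul, neg_re, mul_re, ofReal_re, ofReal_im, mul_zero, sub_zero]
    linear_combination -hκT
  rw [vortexVelocity_const_mul, hz, hnorm]
  refine ((hasDerivAt_collapseProfile _ hτ).mul_const (z i)).congr_deriv ?_
  have hτ' : (1 : ℂ) - t / T ≠ 0 := by exact_mod_cast hτ.ne'
  push_cast
  field_simp

theorem exists_selfSimilar_collapse (hα : 0 < α + 1) (hκ : κ.re < 0)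
    (hz : ∀ i, vortexVelocity α a z i = κ * z i) :
    ∃ T > 0, ∃ x : ι → ℝ → ℂ, (∀ i, x i 0 = z i) ∧
      (∀ i t, t < T → HasDerivAt (x i) (vortexVelocity α a (fun j => x j t) i) t) ∧
      (∀ i j t, t < T → ‖x i t - x j t‖ = (1 - t / T) ^ (1 / (α + 1)) * ‖z i - z j‖) ∧
      ∀ i j, Tendsto (fun t => ‖x i t - x j t‖) (𝓝[<] T) (𝓝 0) := by
  set T := -1 / ((α + 1) * κ.re) with hT_def
  have hT : 0 < T := div_pos_of_neg_of_neg (by norm_num) (mul_neg_of_pos_of_neg hα hκ)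
  have hκT : (α + 1) * (κ.re * T) = -1 := by
    rw [hT_def, ← mul_assoc, mul_div_cancel₀ _ (mul_neg_of_pos_of_neg hα hκ).ne]
  have hγ : (-κ * T).re = 1 / (α + 1) := by
    simp only [neg_mul, neg_re, mul_re, ofReal_re, ofReal_im, mul_zero, sub_zero]
    rw [eq_div_iff hα.ne']
    linear_combination -hκT
  have hτ : ∀ t, t < T → 0 < 1 - t / T := fun t ht => sub_pos.2 ((div_lt_one hT).2 ht)
  refine ⟨T, hT, fun i t => collapseProfile (-κ * T) T t * z i, fun i => by simp,
    fun i t ht => hasDerivAt_collapseProfile_mul hz hκT (hτ t ht) i, fun i j t ht => ?_,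
    fun i j => ?_⟩
  · rw [← mul_sub, norm_mul, norm_collapseProfile _ (hτ t ht), hγ]
  · have hlim := (tendsto_norm_collapseProfile _ hT (by rw [hγ]; positivity)).mul_const
      ‖z i - z j‖
    rw [zero_mul] at hlim
    exact hlim.congr fun t => by rw [← mul_sub, norm_mul]

end SelfSimilar

section ThreeVortices

theorem exists_side_lengths {α : ℝ} (hα : 0 < α + 1) :
    ∃ d₁ d₂ : ℝ, 1 < d₁ ∧ 0 < d₂ ∧ d₂ < 1 ∧ d₁ < 1 + d₂ ∧
      (1 - (d₁ ^ (α + 1))⁻¹) * d₁ ^ 2 = ((d₂ ^ (α + 1))⁻¹ - 1) * d₂ ^ 2 := by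
  set g : ℝ → ℝ := fun d => (1 - (d ^ (α + 1))⁻¹) * d ^ 2 with hg
  have hg_pos : ∀ d, 1 < d → 0 < g d := fun d hd =>
    mul_pos (sub_pos.2 (inv_lt_one_of_one_lt₀ (Real.one_lt_rpow hd hα)))
      (by positivity)
  have hg_neg : ∀ d, 0 < d → d < 1 → g d < 0 := fun d hd₀ hd₁ =>
    mul_neg_of_neg_of_pos
      (sub_neg.2 (one_lt_inv₀ (by positivity) |>.2 (Real.rpow_lt_one hd₀.le hd₁ hα)))
      (by positivity)
  have hg_cont : ∀ d, 0 < d → ContinuousAt g d := fun d hd => by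
    have := Real.continuousAt_rpow_const d (α + 1) (.inl hd.ne')
    exact ((continuousAt_const.sub (this.inv₀ (by positivity))).mul (continuousAt_id.pow 2))
  have hg_one : g 1 = 0 := by simp [hg]
  have hlim : Tendsto (-g) (𝓝[<] 1) (𝓝 0) := by
    have := ((hg_cont 1 one_pos).neg.tendsto).mono_left (nhdsWithin_le_nhds (s := Iio 1))
    rwa [Pi.neg_apply, hg_one, neg_zero] at this
  obtain ⟨d₂, hd₂g, hd₂⟩ := ((hlim.eventually_lt_const (hg_pos (3 / 2) (by norm_num))).and
    (Ioo_mem_nhdsLT (by norm_num : (1 / 2 : ℝ) < 1))).exists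
  obtain ⟨d₁, ⟨hd₁, hd₁'⟩, hgd⟩ := intermediate_value_Ioo (by norm_num : (1 : ℝ) ≤ 3 / 2)
    (fun d hd => (hg_cont d (by linarith [hd.1])).continuousWithinAt)
    (show -g d₂ ∈ Ioo (g 1) (g (3 / 2)) from
      ⟨by linarith [hg_neg d₂ (by linarith [hd₂.1]) hd₂.2], hd₂g⟩)
  exact ⟨d₁, d₂, hd₁, by linarith [hd₂.1], hd₂.2, by linarith [hd₂.1], by
    simp only [hg] at hgd; linear_combination hgd⟩

theorem exists_im_pos_norm_eq_norm_sub_ofReal_eq_one {d₁ d₂ : ℝ} (hd₁ : 0 < d₁)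
    (h₁ : |d₁ - d₂| < 1) (h₂ : 1 < d₁ + d₂) : ∃ v : ℂ, 0 < v.im ∧ ‖v‖ = d₂ ∧ ‖v - d₁‖ = 1 := by
  obtain ⟨h₁, h₁'⟩ := abs_sub_lt_iff.1 h₁
  set x := (d₁ ^ 2 + d₂ ^ 2 - 1) / (2 * d₁) with hx
  have hy : 0 < d₂ ^ 2 - x ^ 2 := by
    -- Heron's formula.
    have : 4 * d₁ ^ 2 * (d₂ ^ 2 - x ^ 2) = (1 - (d₁ - d₂) ^ 2) * ((d₁ + d₂) ^ 2 - 1) := by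
      rw [hx]; field_simp; ring
    nlinarith [mul_pos (by nlinarith : 0 < 1 - (d₁ - d₂) ^ 2) (by nlinarith : 0 < (d₁ + d₂) ^ 2 - 1)]
  refine ⟨⟨x, √(d₂ ^ 2 - x ^ 2)⟩, Real.sqrt_pos.2 hy, ?_, ?_⟩
  · rw [← pow_left_inj₀ (norm_nonneg _) (by linarith) two_ne_zero, Complex.sq_norm, normSq_mk,
      Real.mul_self_sqrt hy.le]
    ring
  · rw [← pow_left_inj₀ (norm_nonneg _) zero_le_one two_ne_zero, Complex.sq_norm]
    simp only [normSq_apply, sub_re, sub_im, ofReal_re, ofReal_im, sub_zero]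
    rw [Real.mul_self_sqrt hy.le, hx]
    field_simp
    ring

-- `h₁`, `h₂` say `V₀ - V₁ = Iμ (z₀ - z₁)` and `V₀ - V₂ = Iμ (z₀ - z₂)`; since the centre of
-- vorticity `a z₀ + z₁ + z₂` is `0` by `hc`, this upgrades to `V = Iμ z`.
theorem vortexVelocity_triangle_eq_mul {α a P Q : ℝ} {u v c μ : ℂ}
    (hu : ‖u‖ ^ (α + 1) = P⁻¹) (hv : ‖v‖ ^ (α + 1) = Q⁻¹) (huv : ‖v - u‖ = 1)
    (ha : (a : ℂ) + 2 ≠ 0) (hc : (a + 2) * c = u + v)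
    (h₁ : ((1 + a) * P + 1) * u + (Q - 1) * v = μ * u)
    (h₂ : (P - 1) * u + ((1 + a) * Q + 1) * v = μ * v) (i : Fin 3) :
    vortexVelocity α ![a, 1, 1] ![c, c - u, c - v] i = I * μ * ![c, c - u, c - v] i := by
  have huv' : ‖u - v‖ = 1 := by rw [norm_sub_rev, huv]
  fin_cases i <;> simp [vortexVelocity_eq_sum, Fin.sum_univ_three, hu, hv, huv, huv'] <;>
    apply mul_left_cancel₀ ha
  · linear_combination I * (h₁ + h₂) - I * μ * hc
  · linear_combination I * (h₁ + h₂) - (a + 2) * I * h₁ - I * μ * hc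
  · linear_combination I * (h₁ + h₂) - (a + 2) * I * h₂ - I * μ * hc

-- Eliminating `μ` between `V₀ - V₁ = Iμ (z₀ - z₁)` and `V₀ - V₂ = Iμ (z₀ - z₂)` for the triangle
-- `z₀ - z₁ = d`, `z₀ - z₂ = v`: the imaginary part is the side relation `hrel`, the real part
-- determines `a`.
theorem triangle_relative_equation {p q d a : ℝ} {v : ℂ} (hd : d ≠ 0) (hqp : q ≠ p)
    (hv : ‖v - d‖ = 1) (hrel : (1 - p) * d ^ 2 = (q - 1) * ‖v‖ ^ 2)
    (ha : a = -(q - 1) / ((q - p) * d ^ 2)) :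
    (p - 1) * d + ((1 + a) * q + 1) * v = ((1 + a) * p + 1 + (q - 1) * v / d) * v := by
  have hvv : v * conj v = ‖v‖ ^ 2 := by rw [mul_conj, normSq_eq_norm_sq]; push_cast; ring
  have hvd : (v - d) * (conj v - d) = 1 := by
    simpa [normSq_eq_norm_sq, hv] using mul_conj (v - d)
  have hrel' : ((1 - p) * d ^ 2 : ℂ) = (q - 1) * ‖v‖ ^ 2 := by exact_mod_cast hrel
  have hdc : (d : ℂ) ≠ 0 := by exact_mod_cast hd
  have hqpc : (q : ℂ) - p ≠ 0 := by exact_mod_cast sub_ne_zero.2 hqp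
  rw [ha]
  push_cast
  linear_combination (norm := skip) ((q - 1) * (d - v) * hvv + (q - 1) * v * hvd
    + (v - d) * hrel') / d ^ 2
  field_simp
  ring

theorem exists_threeVortex_selfSimilar {α : ℝ} (hα : 0 < α + 1) :
    ∃ a : ℝ, a ≠ 0 ∧ ∃ z : Fin 3 → ℂ, Pairwise (fun i j => z i ≠ z j) ∧ ‖z 1 - z 2‖ = 1 ∧
      ∃ κ : ℂ, κ.re < 0 ∧ ∀ i, vortexVelocity α ![a, 1, 1] z i = κ * z i := by
  obtain ⟨d₁, d₂, hd₁, hd₂, hd₂', hd₁₂, hrel⟩ := exists_side_lengths hα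
  obtain ⟨v, hv_im, hv, hv₁⟩ := exists_im_pos_norm_eq_norm_sub_ofReal_eq_one (d₂ := d₂)
    (by linarith : 0 < d₁) (abs_sub_lt_iff.2 ⟨by linarith, by linarith⟩) (by linarith)
  set p := (d₁ ^ (α + 1))⁻¹ with hp
  set q := (d₂ ^ (α + 1))⁻¹ with hq
  have hp1 : p < 1 := inv_lt_one_of_one_lt₀ (Real.one_lt_rpow hd₁ hα)
  have hq1 : 1 < q := one_lt_inv₀ (by positivity) |>.2 (Real.rpow_lt_one hd₂.le hd₂' hα)
  have hqp : 0 < q - p := by linarith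
  set a : ℝ := -(q - 1) / ((q - p) * d₁ ^ 2) with ha
  have ha₀ : a < 0 := div_neg_of_neg_of_pos (by linarith) (by positivity)
  have ha₁ : -1 < a := by
    rw [ha, neg_div, neg_lt_neg_iff, div_lt_one (by positivity)]
    nlinarith [mul_lt_mul_of_pos_left (one_lt_pow₀ hd₁ two_ne_zero) hqp]
  have hd₁c : (d₁ : ℂ) ≠ 0 := by exact_mod_cast (by linarith : d₁ ≠ 0)
  set μ : ℂ := (1 + a) * p + 1 + (q - 1) * v / d₁ with hμ
  have hv₀ : v ≠ 0 := norm_pos_iff.1 (hv ▸ hd₂)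
  have hvd₀ : v - d₁ ≠ 0 := norm_pos_iff.1 (by rw [hv₁]; exact one_pos)
  have hd₁v₀ : (d₁ : ℂ) - v ≠ 0 := by rwa [← neg_sub, neg_ne_zero]
  set c : ℂ := (d₁ + v) / (a + 2) with hc
  have ha₂ : (a : ℂ) + 2 ≠ 0 := by exact_mod_cast (by linarith : a + 2 ≠ 0)
  refine ⟨a, ha₀.ne, ![c, c - d₁, c - v], fun i j hij => ?_,
    by simpa [sub_sub_sub_cancel_left] using hv₁, I * μ, ?_,
    vortexVelocity_triangle_eq_mul (P := p) (Q := q) ?_ (by rw [hv, hq, inv_inv]) hv₁ ha₂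
      (by rw [hc]; field_simp) (by rw [hμ]; field_simp)
      (triangle_relative_equation (by linarith) (by linarith) hv₁ (by rw [hv]; exact hrel) ha)⟩
  · dsimp only
    rw [← sub_ne_zero]
    fin_cases i <;> fin_cases j <;> simp [hd₁c, hv₀, hvd₀, hd₁v₀] at hij ⊢
  · simpa [hμ] using div_pos (mul_pos (sub_pos.2 hq1) hv_im) (by linarith : 0 < d₁)
  · rw [norm_real, Real.norm_of_nonneg (by linarith), hp, inv_inv]

end ThreeVortices

/-- **Existence of a self-similar three-vortex collapse for every `α > 0`.**
Identifying `ℝ²` with `ℂ` (so `v^⊥ = I * v`): for every `α > 0` there exist a nonzero real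
`a`, a time `T > 0`, and a solution `(x₀, x₁, x₂)` of the `α`-point-vortex system on `[0,T)`
with intensities `(a, 1, 1)` and pairwise distinct positions, such that
`‖x₁(0) − x₂(0)‖ = 1`, `‖x₁(t) − x₂(t)‖ = (1 − t/T)^{1/(α+1)}` on `[0,T)`, and all mutual
distances tend to `0` as `t → T⁻`: a collapse in finite time with the optimal Hölder exponent
`1/(α+1)`. -/
theorem exists_self_similar_three_vortex_collapse (α : ℝ) (hα : 0 < α) :
    ∃ (a T : ℝ) (x : Fin 3 → ℝ → ℂ), a ≠ 0 ∧ 0 < T ∧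
      (∀ i j, i ≠ j → ∀ t ∈ Set.Ico (0:ℝ) T, x i t ≠ x j t) ∧
      (∀ i, ∀ t ∈ Set.Ico (0:ℝ) T,
        HasDerivWithinAt (x i)
          (∑ j ∈ Finset.univ.filter (fun j => j ≠ i),
            ((![a, 1, 1]) j / ‖x i t - x j t‖ ^ (α + 1)) • (Complex.I * (x i t - x j t)))
          (Set.Ico (0:ℝ) T) t) ∧
      ‖x 1 0 - x 2 0‖ = 1 ∧
      (∀ t ∈ Set.Ico (0:ℝ) T, ‖x 1 t - x 2 t‖ = (1 - t / T) ^ (1 / (α + 1))) ∧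
      (∀ i j : Fin 3, Filter.Tendsto (fun t => ‖x i t - x j t‖)
        (nhdsWithin T (Set.Iio T)) (nhds 0)) := by
  have hα' : 0 < α + 1 := by linarith
  obtain ⟨a, ha, z, hz_ne, hz₁₂, κ, hκ, hz⟩ := exists_threeVortex_selfSimilar hα'
  obtain ⟨T, hT, x, hx₀, hx, hdist, hcollapse⟩ := exists_selfSimilar_collapse hα' hκ hz
  refine ⟨a, T, x, ha, hT, fun i j hij t ht => ?_, fun i t ht => (hx i t ht.2).hasDerivWithinAt,
    by rw [hx₀, hx₀, hz₁₂], fun t ht => by rw [hdist 1 2 t ht.2, hz₁₂, mul_one], hcollapse⟩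
  rw [← sub_ne_zero, ← norm_pos_iff, hdist i j t ht.2]
  exact mul_pos (Real.rpow_pos_of_pos (sub_pos.2 ((div_lt_one hT).2 ht.2)) _)
    (norm_pos_iff.2 (sub_ne_zero.2 (hz_ne hij)))
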